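/- arXiv:2602.07022 — 2 statements merged into one kernel-verified Lean document; each statement's English description precedes it below -/
import Mathlib

section
/- (Conditional Score Matching Upper Bound.) Let ν be a measure on C and let f(c,x) := p_c(c) p(x|c) be a joint probability density on C × ℝⁿ (p_c a probability density with respect to ν, p(·|c) probability densities with respect to Lebesgue measure), with marginal m(x) := ∫ f(c,x) dν(c). Assume: f(c,x) > 0 and m(x) > 0 for a.e. (c,x); for ν-a.e. c the map x ↦ f(c,x) is differentiable with gradient dominated by a ν-integrable function locally uniformly in x (so that ∇m(x) = ∫ ∇ₓ f(c,x) dν(c)); and the functions (c,x) ↦ ‖∇ₓ log p(x|c) − s(x)‖² and x ↦ ‖∇ₓ log m(x) − s(x)‖² are integrable against the joint and marginal densities respectively, where s : ℝⁿ → ℝⁿ is measurable. Then ∫ m(x) ‖∇ₓ log m(x) − s(x)‖² dx ≤ ∫∫ p_c(c) p(x|c) ‖∇ₓ log p(x|c) − s(x)‖² dx dν(c). -/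
open MeasureTheory
open scoped RealInnerProductSpace Topology

set_option maxHeartbeats 1000000

private lemma sigmaFinite_of_integrable_pos' {α : Type*} [MeasurableSpace α] {μ : Measure α}
    {G : α → ℝ} (hG : Integrable G μ) (hpos : ∀ᵐ a ∂μ, 0 < G a) : SigmaFinite μ := by
  obtain ⟨G', hG'meas, hGG'⟩ := hG.aemeasurable
  have hG' : Integrable G' μ := hG.congr hGG'
  have hpos' : ∀ᵐ a ∂μ, 0 < G' a := by
    filter_upwards [hpos, hGG'] with a h1 h2; rwa [← h2]
  set N : Set α := {a | ¬ 0 < G' a} with hN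
  have hNnull : μ N = 0 := hpos'
  refine Measure.sigmaFinite_of_countable
    (S := Set.range (fun k : ℕ => {a | 1/((k:ℝ)+1) ≤ G' a} ∪ N)) (Set.countable_range _) ?_ ?_
  · rintro s ⟨k, rfl⟩
    refine (measure_union_le _ _).trans_lt ?_
    rw [hNnull, add_zero]
    exact hG'.measure_ge_lt_top (by positivity)
  · rw [Set.sUnion_range]
    ext a
    simp only [Set.mem_iUnion, Set.mem_union, Set.mem_setOf_eq, Set.mem_univ, iff_true, hN]
    by_cases h : 0 < G' a
    · obtain ⟨k, hk⟩ := exists_nat_one_div_lt h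
      exact ⟨k, Or.inl hk.le⟩
    · exact ⟨0, Or.inr h⟩

private lemma jensen_step' {α : Type*} [MeasurableSpace α] (μ : Measure α) {n : ℕ}
    (f : α → ℝ) (u : α → EuclideanSpace ℝ (Fin n)) (sx : EuclideanSpace ℝ (Fin n))
    (hf_int : Integrable f μ) (hm : 0 < ∫ a, f a ∂μ)
    (hfu_int : Integrable (fun a => f a • u a) μ)
    (hF_int : Integrable (fun a => f a * ‖u a - sx‖ ^ 2) μ)
    (hpos : ∀ᵐ a ∂μ, 0 < f a) :
    (∫ a, f a ∂μ) * ‖(∫ a, f a ∂μ)⁻¹ • (∫ a, f a • u a ∂μ) - sx‖ ^ 2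
      ≤ ∫ a, f a * ‖u a - sx‖ ^ 2 ∂μ := by
  set m := ∫ a, f a ∂μ with hm_def
  set I := ∫ a, f a • u a ∂μ with hI_def
  set w : EuclideanSpace ℝ (Fin n) := m⁻¹ • I - sx with hw_def
  have hsplit : (fun a => f a • (u a - sx)) = fun a => f a • u a - f a • sx := by
    ext a; rw [smul_sub]
  have hv_int : Integrable (fun a => f a • (u a - sx)) μ := by
    rw [hsplit]; exact hfu_int.sub (hf_int.smul_const sx)
  have h2 : ∫ a, f a • (u a - sx) ∂μ = m • w := by
    have h2a : ∫ a, f a • (u a - sx) ∂μ = I - m • sx := by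
      rw [hsplit, integral_sub hfu_int (hf_int.smul_const sx), integral_smul_const]
    rw [h2a, hw_def, smul_sub, smul_smul, mul_inv_cancel₀ hm.ne', one_smul]
  have h3 : ∫ a, ⟪f a • (u a - sx), w⟫ ∂μ = m * ‖w‖ ^ 2 := by
    have : ∀ a, ⟪f a • (u a - sx), w⟫ = ⟪w, f a • (u a - sx)⟫ := fun a => real_inner_comm _ _
    simp_rw [this]
    rw [integral_inner hv_int w, h2, real_inner_smul_right, real_inner_self_eq_norm_sq]
  have h4 : ∀ᵐ a ∂μ, ⟪f a • (u a - sx), w⟫ ≤ f a * ‖u a - sx‖ ^ 2 / 2 + f a * ‖w‖ ^ 2 / 2 := by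
    filter_upwards [hpos] with a ha
    rw [real_inner_smul_left]
    have h5 := real_inner_le_norm (u a - sx) w
    nlinarith [mul_le_mul_of_nonneg_left h5 ha.le,
      mul_nonneg ha.le (sq_nonneg (‖u a - sx‖ - ‖w‖))]
  have h6 : Integrable (fun a => ⟪f a • (u a - sx), w⟫) μ := hv_int.inner_const w
  have h7a : Integrable (fun a => f a * ‖u a - sx‖ ^ 2 / 2) μ := hF_int.div_const 2
  have h7b : Integrable (fun a => f a * ‖w‖ ^ 2 / 2) μ := (hf_int.mul_const _).div_const 2
  have h8 := integral_mono_ae h6 (h7a.add h7b) h4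
  simp only [Pi.add_apply] at h8
  rw [h3, integral_add h7a h7b, integral_div, integral_div, integral_mul_const] at h8
  linarith

/-- Conditional Score Matching Upper Bound (Theorem 1): the (unconditional) score
matching loss of a measurable score `s` against the marginal `m x = ∫ pC c * p c x dν`
is upper-bounded by the conditional score matching loss against the conditional
densities `p c`.  Here `Dp c x` is the gradient of `x ↦ p c x`, so that
`(p c x)⁻¹ • Dp c x = ∇ₓ log p(x|c)` and
`(m x)⁻¹ • ∫ pC c • Dp c x dν = ∇ₓ log m(x)`. -/
theorem conditional_score_matching_upper_bound
    {C : Type*} [MeasurableSpace C] (ν : Measure C) {n : ℕ}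
    (pC : C → ℝ) (p : C → EuclideanSpace ℝ (Fin n) → ℝ)
    (Dp : C → EuclideanSpace ℝ (Fin n) → EuclideanSpace ℝ (Fin n))
    (s : EuclideanSpace ℝ (Fin n) → EuclideanSpace ℝ (Fin n))
    (hs : Measurable s)
    (hjointpos : ∀ᵐ z ∂(ν.prod (volume : Measure (EuclideanSpace ℝ (Fin n)))),
      0 < pC z.1 * p z.1 z.2)
    (hmpos : ∀ᵐ x ∂(volume : Measure (EuclideanSpace ℝ (Fin n))),
      0 < ∫ c, pC c * p c x ∂ν)
    (hdiff : ∀ᵐ c ∂ν, ∀ x, HasGradientAt (fun y => pC c * p c y) (pC c • Dp c x) x)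
    (gdom : C → ℝ) (hgdom : Integrable gdom ν)
    (hdom : ∀ᵐ c ∂ν, ∀ x, ‖pC c • Dp c x‖ ≤ gdom c)
    (hgradm : ∀ x, HasGradientAt (fun y => ∫ c, pC c * p c y ∂ν)
      (∫ c, pC c • Dp c x ∂ν) x)
    (hint_cond : Integrable (fun z : C × EuclideanSpace ℝ (Fin n) =>
        pC z.1 * p z.1 z.2 * ‖(p z.1 z.2)⁻¹ • Dp z.1 z.2 - s z.2‖ ^ 2)
      (ν.prod volume))
    (hint_marg : Integrable (fun x : EuclideanSpace ℝ (Fin n) =>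
        (∫ c, pC c * p c x ∂ν) *
          ‖(∫ c, pC c * p c x ∂ν)⁻¹ • (∫ c, pC c • Dp c x ∂ν) - s x‖ ^ 2) volume) :
    ∫ x, (∫ c, pC c * p c x ∂ν) *
        ‖(∫ c, pC c * p c x ∂ν)⁻¹ • (∫ c, pC c • Dp c x ∂ν) - s x‖ ^ 2 ∂volume
      ≤ ∫ c, ∫ x, pC c * p c x * ‖(p c x)⁻¹ • Dp c x - s x‖ ^ 2 ∂volume ∂ν := by
  classical
  have hvolne : (volume : Measure (EuclideanSpace ℝ (Fin n))) ≠ 0 := by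
    intro h
    have h2 := (isOpen_univ (X := EuclideanSpace ℝ (Fin n))).measure_pos
      (volume : Measure (EuclideanSpace ℝ (Fin n))) Set.univ_nonempty
    rw [h] at h2; simp at h2
  -- Step 0: basic a.e. facts in `c`
  have hcont : ∀ᵐ c ∂ν, Continuous fun x => pC c * p c x := by
    filter_upwards [hdiff] with c hc
    exact continuous_iff_continuousAt.2 fun x => (hc x).continuousAt
  have hccpos : ∀ᵐ c ∂ν, ∀ᵐ x ∂(volume : Measure (EuclideanSpace ℝ (Fin n))),
      0 < pC c * p c x := Measure.ae_ae_of_ae_prod hjointpos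
  have hnonneg : ∀ᵐ c ∂ν, ∀ x, 0 ≤ pC c * p c x := by
    filter_upwards [hcont, hccpos] with c hc hp
    intro x
    by_contra hlt
    push_neg at hlt
    have hU : IsOpen ((fun y => pC c * p c y) ⁻¹' Set.Iio 0) :=
      hc.isOpen_preimage _ isOpen_Iio
    have hpos := hU.measure_pos (volume : Measure (EuclideanSpace ℝ (Fin n))) ⟨x, hlt⟩
    have hnull : (volume : Measure (EuclideanSpace ℝ (Fin n)))
        ((fun y => pC c * p c y) ⁻¹' Set.Iio 0) = 0 := by
      refine measure_mono_null ?_ (ae_iff.1 hp)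
      intro y hy
      simp only [Set.mem_setOf_eq, not_lt]
      exact le_of_lt hy
    rw [hnull] at hpos
    exact lt_irrefl 0 hpos
  -- Step 1: a.e. integrability of the marginal integrand
  have hm_int : ∀ᵐ x ∂(volume : Measure (EuclideanSpace ℝ (Fin n))),
      Integrable (fun c => pC c * p c x) ν := by
    filter_upwards [hmpos] with x hx
    by_contra h
    rw [integral_undef h] at hx
    exact lt_irrefl 0 hx
  -- Step 2: a.e.-strong-measurability of `c ↦ pC c * p c x` for EVERY `x`
  have hSd : Dense {x : EuclideanSpace ℝ (Fin n) | Integrable (fun c => pC c * p c x) ν} :=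
    Measure.dense_of_ae (μ := (volume : Measure (EuclideanSpace ℝ (Fin n)))) hm_int
  obtain ⟨D, hDS, hDc, hDd⟩ := hSd.exists_countable_dense_subset
  have hchoice : ∀ (x : EuclideanSpace ℝ (Fin n)) (k : ℕ), ∃ d ∈ D, dist x d < 1/((k:ℝ)+1) :=
    fun x k => hDd.exists_dist_lt x (by positivity)
  choose dseq hdseqD hdseq using hchoice
  have hdlim : ∀ x, Filter.Tendsto (fun k => dseq x k) Filter.atTop (nhds x) := by
    intro x
    rw [tendsto_iff_dist_tendsto_zero]
    refine squeeze_zero (fun k => dist_nonneg) (fun k => ?_) tendsto_one_div_add_atTop_nhds_zero_nat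
    rw [dist_comm]
    exact (hdseq x k).le
  have hf_meas : ∀ x, AEStronglyMeasurable (fun c => pC c * p c x) ν := by
    intro x
    apply aestronglyMeasurable_of_tendsto_ae (u := Filter.atTop)
      (f := fun k c => pC c * p c (dseq x k))
    · intro k
      have : Integrable (fun c => pC c * p c (dseq x k)) ν := hDS (hdseqD x k)
      exact this.aestronglyMeasurable
    · filter_upwards [hcont] with c hc
      exact (hc.tendsto x).comp (hdlim x)
  -- Step 3: a.e.-strong-measurability of the gradients for every `x`
  have hgrad_meas : ∀ x, AEStronglyMeasurable (fun c => pC c • Dp c x) ν := by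
    intro x
    have hcoord : ∀ i : Fin n, AEStronglyMeasurable (fun c => (pC c • Dp c x) i) ν := by
      intro i
      rw [aestronglyMeasurable_iff_aemeasurable]
      set v : EuclideanSpace ℝ (Fin n) := EuclideanSpace.single i (1:ℝ) with hv
      have key : ∀ᵐ c ∂ν, Filter.Tendsto
          (fun k : ℕ => (pC c * p c (x + (1/((k:ℝ)+1)) • v) - pC c * p c x) / (1/((k:ℝ)+1)))
          Filter.atTop (nhds ((pC c • Dp c x) i)) := by
        filter_upwards [hdiff] with c hc
        have hF' : HasFDerivAt (fun y => pC c * p c y)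
            ((InnerProductSpace.toDual ℝ (EuclideanSpace ℝ (Fin n))) (pC c • Dp c x))
            ((fun t : ℝ => x + t • v) 0) := by
          simpa using (hc x).hasFDerivAt
        have hline : HasDerivAt (fun t : ℝ => x + t • v) v 0 := by
          simpa using ((hasDerivAt_id (0:ℝ)).smul_const v).const_add x
        have hcomp := hF'.comp_hasDerivAt 0 hline
        rw [hasDerivAt_iff_tendsto_slope] at hcomp
        have hseq : Filter.Tendsto (fun k : ℕ => 1/((k:ℝ)+1)) Filter.atTop
            (nhdsWithin (0:ℝ) {(0:ℝ)}ᶜ) := by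
          refine tendsto_nhdsWithin_of_tendsto_nhds_of_eventually_within _
            tendsto_one_div_add_atTop_nhds_zero_nat ?_
          filter_upwards with k
          simp only [Set.mem_compl_iff, Set.mem_singleton_iff]
          positivity
        have hlim := hcomp.comp hseq
        have hfun : (fun k : ℕ =>
              (pC c * p c (x + (1/((k:ℝ)+1)) • v) - pC c * p c x) / (1/((k:ℝ)+1)))
            = fun k : ℕ => slope ((fun y => pC c * p c y) ∘ fun t : ℝ => x + t • v) 0
                (1/((k:ℝ)+1)) := by
          funext k
          rw [slope_def_field]
          simp
        have hval : (InnerProductSpace.toDual ℝ (EuclideanSpace ℝ (Fin n)) (pC c • Dp c x)) v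
            = (pC c • Dp c x) i := by
          simp [hv, EuclideanSpace.inner_single_right]
        rw [hfun, ← hval]
        exact hlim
      exact aemeasurable_of_tendsto_metrizable_ae Filter.atTop
        (fun k => ((hf_meas _).aemeasurable.sub (hf_meas x).aemeasurable).div_const _) key
    have hrepr : (fun c => pC c • Dp c x) = fun c => ∑ i : Fin n,
        ((pC c • Dp c x) i) • ((EuclideanSpace.basisFun (Fin n) ℝ) i : EuclideanSpace ℝ (Fin n)) := by
      funext c
      have hr := (EuclideanSpace.basisFun (Fin n) ℝ).sum_repr (pC c • Dp c x)
      simp only [EuclideanSpace.basisFun_repr] at hr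
      exact hr.symm
    rw [hrepr]
    exact Finset.aestronglyMeasurable_fun_sum _ fun i _ => (hcoord i).smul_const ((EuclideanSpace.basisFun (Fin n) ℝ) i : EuclideanSpace ℝ (Fin n))
  -- Step 4: integrability of the gradients
  have hInt_grad : ∀ x, Integrable (fun c => pC c • Dp c x) ν := fun x =>
    Integrable.mono' hgdom (hgrad_meas x) (hdom.mono fun c h => h x)
  -- Step 5: `ν` is sigma-finite
  haveI hne : (ae (volume : Measure (EuclideanSpace ℝ (Fin n)))).NeBot := ae_neBot.mpr hvolne
  obtain ⟨x₀, hx₀⟩ := hm_int.exists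
  haveI : SigmaFinite ν := by
    apply sigmaFinite_of_integrable_pos' (G := fun c => gdom c + pC c * p c x₀) (hgdom.add hx₀)
    filter_upwards [hdom, hdiff, hnonneg, hccpos] with c h1 h2 h3 h4
    have hg0 : 0 ≤ gdom c := le_trans (norm_nonneg _) (h1 x₀)
    rcases hg0.lt_or_eq with hg | hg
    · have := h3 x₀; linarith
    · -- gdom c = 0, so the density is constant in x and positive
      have hzero : ∀ x, pC c • Dp c x = 0 := fun x =>
        norm_le_zero_iff.1 ((h1 x).trans hg.symm.le)
      have hconst : ∀ x, pC c * p c x = pC c * p c x₀ := by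
        intro x
        have hdiffable : Differentiable ℝ (fun y => pC c * p c y) := fun y =>
          (h2 y).differentiableAt
        have hfz : ∀ y, fderiv ℝ (fun y => pC c * p c y) y = 0 := by
          intro y
          have h5 : HasGradientAt (fun y => pC c * p c y) 0 y := by
            have := h2 y; rwa [hzero y] at this
          rw [h5.hasFDerivAt.fderiv]
          simp
        exact is_const_of_fderiv_eq_zero hdiffable hfz x x₀
      have hx0pos : 0 < pC c * p c x₀ := by
        by_contra hle
        push_neg at hle
        have hfalse : ∀ᵐ x ∂(volume : Measure (EuclideanSpace ℝ (Fin n))), False := by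
          filter_upwards [h4] with x hx
          rw [hconst x] at hx; linarith
        exact hne.ne (Filter.eventually_false_iff_eq_bot.mp hfalse)
      linarith
  -- Step 6: Fubini and the pointwise Jensen inequality
  have hswap : Integrable (fun z : EuclideanSpace ℝ (Fin n) × C =>
      pC z.2 * p z.2 z.1 * ‖(p z.2 z.1)⁻¹ • Dp z.2 z.1 - s z.1‖ ^ 2)
      ((volume : Measure (EuclideanSpace ℝ (Fin n))).prod ν) := hint_cond.swap
  have hFslice : ∀ᵐ x ∂(volume : Measure (EuclideanSpace ℝ (Fin n))),
      Integrable (fun c => pC c * p c x * ‖(p c x)⁻¹ • Dp c x - s x‖ ^ 2) ν :=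
    hswap.prod_right_ae
  have hposx : ∀ᵐ x ∂(volume : Measure (EuclideanSpace ℝ (Fin n))),
      ∀ᵐ c ∂ν, 0 < pC c * p c x := by
    have h1 : ∀ᵐ z ∂((volume : Measure (EuclideanSpace ℝ (Fin n))).prod ν),
        0 < pC z.2 * p z.2 z.1 := by
      have hmap : Measure.map Prod.swap ((volume : Measure (EuclideanSpace ℝ (Fin n))).prod ν)
          = ν.prod volume := Measure.prod_swap
      rw [← hmap] at hjointpos
      exact ae_of_ae_map measurable_swap.aemeasurable hjointpos
    exact Measure.ae_ae_of_ae_prod h1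
  have key : ∀ᵐ x ∂(volume : Measure (EuclideanSpace ℝ (Fin n))),
      (∫ c, pC c * p c x ∂ν) *
          ‖(∫ c, pC c * p c x ∂ν)⁻¹ • (∫ c, pC c • Dp c x ∂ν) - s x‖ ^ 2
        ≤ ∫ c, pC c * p c x * ‖(p c x)⁻¹ • Dp c x - s x‖ ^ 2 ∂ν := by
    filter_upwards [hmpos, hm_int, hFslice, hposx] with x h1 h2 h3 h4
    have heq : (fun c => (pC c * p c x) • ((p c x)⁻¹ • Dp c x)) =ᵐ[ν]
        fun c => pC c • Dp c x := by
      filter_upwards [h4] with c hc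
      have hp : p c x ≠ 0 := by
        intro h0; rw [h0, mul_zero] at hc; exact lt_irrefl 0 hc
      rw [smul_smul, mul_assoc, mul_inv_cancel₀ hp, mul_one]
    have hfu_int : Integrable (fun c => (pC c * p c x) • ((p c x)⁻¹ • Dp c x)) ν :=
      (hInt_grad x).congr heq.symm
    have hjs := jensen_step' ν (fun c => pC c * p c x) (fun c => (p c x)⁻¹ • Dp c x) (s x)
      h2 h1 hfu_int h3 h4
    rwa [integral_congr_ae heq] at hjs
  have hInt_h : Integrable (fun x => ∫ c, pC c * p c x * ‖(p c x)⁻¹ • Dp c x - s x‖ ^ 2 ∂ν)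
      (volume : Measure (EuclideanSpace ℝ (Fin n))) := hswap.integral_prod_left
  calc ∫ x, (∫ c, pC c * p c x ∂ν) *
        ‖(∫ c, pC c * p c x ∂ν)⁻¹ • (∫ c, pC c • Dp c x ∂ν) - s x‖ ^ 2 ∂volume
      ≤ ∫ x, ∫ c, pC c * p c x * ‖(p c x)⁻¹ • Dp c x - s x‖ ^ 2 ∂ν ∂volume :=
        integral_mono_ae hint_marg hInt_h key
    _ = ∫ z : EuclideanSpace ℝ (Fin n) × C,
          pC z.2 * p z.2 z.1 * ‖(p z.2 z.1)⁻¹ • Dp z.2 z.1 - s z.1‖ ^ 2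
          ∂((volume : Measure (EuclideanSpace ℝ (Fin n))).prod ν) :=
        (integral_prod _ hswap).symm
    _ = ∫ z, pC z.1 * p z.1 z.2 * ‖(p z.1 z.2)⁻¹ • Dp z.1 z.2 - s z.2‖ ^ 2
          ∂(ν.prod (volume : Measure (EuclideanSpace ℝ (Fin n)))) :=
        integral_prod_swap (fun z : C × EuclideanSpace ℝ (Fin n) =>
          pC z.1 * p z.1 z.2 * ‖(p z.1 z.2)⁻¹ • Dp z.1 z.2 - s z.2‖ ^ 2)
    _ = ∫ c, ∫ x, pC c * p c x * ‖(p c x)⁻¹ • Dp c x - s x‖ ^ 2 ∂volume ∂ν :=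
        integral_prod _ hint_cond
end

section
/- (Descent of Gradient Norm in Autoregressive Process.) Let X and C be real normed vector spaces, let p : X × C → ℝ, let c_π ∈ C, let (c_i)_{i∈ℕ} be a sequence in C, and let δ, L, M₁, M₂, C₀ > 0 and ρ ∈ (0,1) be constants. Assume: (i) for every x ∈ X and c ∈ C, the map x ↦ p(x,c) is differentiable at x with Fréchet derivative D(x,c); (ii) p(x,c) ≥ δ for all x, c; (iii) ‖D(x,c₁) − D(x,c₂)‖ ≤ L‖c₁ − c₂‖ for all x, c₁, c₂ (Lipschitz gradient in the condition); (iv) |p(x,c₁) − p(x,c₂)| ≤ L‖c₁ − c₂‖ for all x, c₁, c₂; (v) p(x,c_π) ≤ M₂ for all x; (vi) ‖D(x,c_π)‖ ≤ M₁ for all x; (vii) ‖c_i − c_π‖ ≤ C₀·ρ^i for all i ∈ ℕ. Then for every x ∈ X and i ∈ ℕ: ‖D(x,c_i)‖ / p(x,c_i) ≤ M·ρ^i + m, where M = (L·C₀/δ²)(M₂ + M₁) and m = M₁/δ. Since p > 0, the left-hand side equals the norm of the gradient of x ↦ log p(x,c_i), so ‖∇ₓ log p(x|c_i)‖ ≤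 M·ρ^i + m. -/
/-!
Compare the score at the condition `c` with the stationary one: the triangle inequality and the
Lipschitz bound give `‖D(x,c)‖ ≤ M₁ + L‖c - c_π‖`, and dividing by `p(x,c) ≥ δ` gives
`M₁/δ + L‖c - c_π‖/δ`. Since `δ ≤ p(x,c_π) ≤ M₂ ≤ M₂ + M₁`, the perturbation term is at most
`L‖c - c_π‖(M₂ + M₁)/δ²`, and geometric convergence of the conditions turns `‖c - c_π‖`
into `C₀ ρⁱ`.
-/

theorem div_le_div_sq_mul_add_div {u p δ K m a : ℝ} (hu : 0 ≤ u) (hδ : 0 < δ) (hp : δ ≤ p)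
    (hK : δ ≤ K) (ha : 0 ≤ a) (hua : u ≤ m + a) : u / p ≤ a / δ ^ 2 * K + m / δ := by
  have hδK : a / δ ≤ a / δ ^ 2 * K :=
    calc a / δ = a / δ ^ 2 * δ := by field_simp
      _ ≤ a / δ ^ 2 * K := by gcongr
  calc u / p ≤ (m + a) / δ := div_le_div₀ (hu.trans hua) hua hδ hp
    _ = a / δ + m / δ := by ring
    _ ≤ a / δ ^ 2 * K + m / δ := by gcongr

section

variable {X Cond E : Type*} [SeminormedAddCommGroup Cond] [SeminormedAddCommGroup E]
  {p : X → Cond → ℝ} {D : X → Cond → E} {cπ : Cond} {δ L M₁ M₂ : ℝ}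

theorem norm_div_le_of_lipschitz_of_stationary_bound (hδ : 0 < δ) (hL : 0 ≤ L)
    (hpos : ∀ x c, δ ≤ p x c) (hLipD : ∀ x c₁ c₂, ‖D x c₁ - D x c₂‖ ≤ L * ‖c₁ - c₂‖)
    (hboundp : ∀ x, p x cπ ≤ M₂) (hboundD : ∀ x, ‖D x cπ‖ ≤ M₁) (x : X) (c : Cond) :
    ‖D x c‖ / p x c ≤ L * ‖c - cπ‖ / δ ^ 2 * (M₂ + M₁) + M₁ / δ := by
  have hM₁ : 0 ≤ M₁ := (norm_nonneg _).trans (hboundD x)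
  have hδM₂ : δ ≤ M₂ := (hpos x cπ).trans (hboundp x)
  have hD : ‖D x c‖ ≤ M₁ + L * ‖c - cπ‖ :=
    calc ‖D x c‖ ≤ ‖D x cπ‖ + ‖D x c - D x cπ‖ := norm_le_insert' _ _
      _ ≤ M₁ + L * ‖c - cπ‖ := add_le_add (hboundD x) (hLipD x c cπ)
  exact div_le_div_sq_mul_add_div (norm_nonneg _) hδ (hpos x c) (by linarith)
    (by positivity) hD

end

theorem descent_of_gradient_norm_in_autoregressive_process_general
    {X Cond : Type*} [NormedAddCommGroup X] [NormedSpace ℝ X]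
    [NormedAddCommGroup Cond]
    (p : X → Cond → ℝ) (D : X → Cond → X →L[ℝ] ℝ)
    (cπ : Cond) (c : ℕ → Cond)
    (δ L M₁ M₂ C₀ ρ : ℝ)
    (hδ : 0 < δ) (hL : 0 < L)
    (hpos : ∀ x cc, δ ≤ p x cc)
    (hLipD : ∀ x c₁ c₂, ‖D x c₁ - D x c₂‖ ≤ L * ‖c₁ - c₂‖)
    (hboundp : ∀ x, p x cπ ≤ M₂)
    (hboundD : ∀ x, ‖D x cπ‖ ≤ M₁)
    (hconv : ∀ i : ℕ, ‖c i - cπ‖ ≤ C₀ * ρ ^ i) :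
    ∀ (x : X) (i : ℕ),
      ‖D x (c i)‖ / p x (c i) ≤ (L * C₀ / δ ^ 2) * (M₂ + M₁) * ρ ^ i + M₁ / δ := by
  intro x i
  have hM : 0 ≤ M₂ + M₁ := by
    linarith [(hpos x cπ).trans (hboundp x), (norm_nonneg _).trans (hboundD x)]
  calc ‖D x (c i)‖ / p x (c i) ≤ L * ‖c i - cπ‖ / δ ^ 2 * (M₂ + M₁) + M₁ / δ :=
        norm_div_le_of_lipschitz_of_stationary_bound hδ hL.le hpos hLipD hboundp hboundD x (c i)
    _ ≤ L * (C₀ * ρ ^ i) / δ ^ 2 * (M₂ + M₁) + M₁ / δ := by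
        gcongr
        exact hconv i
    _ = (L * C₀ / δ ^ 2) * (M₂ + M₁) * ρ ^ i + M₁ / δ := by ring

/-- Descent of Gradient Norm in Autoregressive Process (Theorem 2): if the conditional
density `p (x, c)` is uniformly bounded below by `δ`, depends Lipschitz-continuously
(together with its Fréchet derivative `D (x, c)` in `x`) on the condition `c`, the
stationary density and its derivative are bounded by `M₂` and `M₁`, and the conditions
converge geometrically (`‖cᵢ - c_π‖ ≤ C₀ ρⁱ`), then the norm of the conditional score
`‖∇ₓ log p(x | cᵢ)‖ = ‖D (x, cᵢ)‖ / p (x, cᵢ)` satisfies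
`‖D (x, cᵢ)‖ / p (x, cᵢ) ≤ M ρⁱ + m` with `M = (L C₀ / δ²)(M₂ + M₁)` and `m = M₁/δ`. -/
theorem descent_of_gradient_norm_in_autoregressive_process
    {X Cond : Type*} [NormedAddCommGroup X] [NormedSpace ℝ X]
    [NormedAddCommGroup Cond] [NormedSpace ℝ Cond]
    (p : X → Cond → ℝ) (D : X → Cond → X →L[ℝ] ℝ)
    (cπ : Cond) (c : ℕ → Cond)
    (δ L M₁ M₂ C₀ ρ : ℝ)
    (hδ : 0 < δ) (hL : 0 < L) (hM₁ : 0 < M₁) (hM₂ : 0 < M₂) (hC₀ : 0 < C₀)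
    (hρ : ρ ∈ Set.Ioo (0 : ℝ) 1)
    (hdiff : ∀ x cc, HasFDerivAt (fun y => p y cc) (D x cc) x)
    (hpos : ∀ x cc, δ ≤ p x cc)
    (hLipD : ∀ x c₁ c₂, ‖D x c₁ - D x c₂‖ ≤ L * ‖c₁ - c₂‖)
    (hLipp : ∀ x c₁ c₂, |p x c₁ - p x c₂| ≤ L * ‖c₁ - c₂‖)
    (hboundp : ∀ x, p x cπ ≤ M₂)
    (hboundD : ∀ x, ‖D x cπ‖ ≤ M₁)
    (hconv : ∀ i : ℕ, ‖c i - cπ‖ ≤ C₀ * ρ ^ i) :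
    ∀ (x : X) (i : ℕ),
      ‖D x (c i)‖ / p x (c i) ≤ (L * C₀ / δ ^ 2) * (M₂ + M₁) * ρ ^ i + M₁ / δ :=
  descent_of_gradient_norm_in_autoregressive_process_general p D cπ c δ L M₁ M₂ C₀ ρ hδ hL hpos
    hLipD hboundp hboundD hconv
end
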